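/- Let ‖·‖ be any norm on ℝ². There is a constant C depending only on ‖·‖ such that for every real L ≥ 1 and every k ∈ ℤ²∖{0} with ‖k‖ < L/2, the number of lattice points j ∈ ℤ² with L − ‖k‖ ≤ ‖j‖ ≤ L is at most C·L·‖k‖. -/
import Mathlib
open MeasureTheory Set Pointwise ENNReal

set_option maxHeartbeats 2000000 in
/-- For any norm `nrm` on `ℝ²` there is a constant `C` such that for every
`L ≥ 1` and every nonzero `k ∈ ℤ²` with `‖k‖ < L/2`, the number of lattice points `j ∈ ℤ²`
with `L - ‖k‖ ≤ ‖j‖ ≤ L` is at most `C·L·‖k‖`. -/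
theorem statement17 (nrm : ℝ × ℝ → ℝ)
    (hdef : ∀ p : ℝ × ℝ, nrm p = 0 ↔ p = 0)
    (hsmul : ∀ (c : ℝ) (p : ℝ × ℝ), nrm (c • p) = |c| * nrm p)
    (htri : ∀ p q : ℝ × ℝ, nrm (p + q) ≤ nrm p + nrm q) :
    ∃ C : ℝ, 0 < C ∧
      ∀ (L : ℝ), 1 ≤ L →
      ∀ k : ℤ × ℤ, k ≠ 0 → nrm ((k.1 : ℝ), (k.2 : ℝ)) < L / 2 →
        ({j : ℤ × ℤ | L - nrm ((k.1 : ℝ), (k.2 : ℝ)) ≤ nrm ((j.1 : ℝ), (j.2 : ℝ)) ∧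
            nrm ((j.1 : ℝ), (j.2 : ℝ)) ≤ L}.ncard : ℝ)
          ≤ C * L * nrm ((k.1 : ℝ), (k.2 : ℝ)) := by
  -- basic facts
  have h0 : nrm 0 = 0 := (hdef 0).mpr rfl
  have hneg : ∀ p, nrm (-p) = nrm p := by
    intro p; have := hsmul (-1) p; simpa using this
  have hnonneg : ∀ p, 0 ≤ nrm p := by
    intro p
    have h1 := htri p (-p)
    rw [add_neg_cancel, h0, hneg] at h1
    linarith
  -- upper bound via coordinates
  set c₁ : ℝ := nrm (1, 0) with hc₁
  set c₂ : ℝ := nrm (0, 1) with hc₂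
  have hc₁0 : 0 ≤ c₁ := hnonneg _
  have hc₂0 : 0 ≤ c₂ := hnonneg _
  have hupper : ∀ p : ℝ × ℝ, nrm p ≤ c₁ * |p.1| + c₂ * |p.2| := by
    intro p
    have hp : p = p.1 • ((1:ℝ), (0:ℝ)) + p.2 • ((0:ℝ), (1:ℝ)) := by
      ext <;> simp
    calc nrm p = nrm (p.1 • ((1:ℝ), (0:ℝ)) + p.2 • ((0:ℝ), (1:ℝ))) := by rw [← hp]
    _ ≤ nrm (p.1 • ((1:ℝ), (0:ℝ))) + nrm (p.2 • ((0:ℝ), (1:ℝ))) := htri _ _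
    _ = c₁ * |p.1| + c₂ * |p.2| := by rw [hsmul, hsmul]; ring
  -- reverse triangle
  have hrev : ∀ p q : ℝ × ℝ, |nrm p - nrm q| ≤ nrm (p - q) := by
    intro p q
    rw [abs_sub_le_iff]
    constructor
    · have := htri q (p - q); simp at this; linarith
    · have := htri p (q - p); simp at this
      have h2 : nrm (q - p) = nrm (p - q) := by
        rw [show q - p = -(p - q) by ring, hneg]
      linarith
  -- continuity
  have hcont : Continuous nrm := by
    have : LipschitzWith (Real.toNNReal (c₁ + c₂)) nrm := by
      apply LipschitzWith.of_dist_le_mul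
      intro p q
      have hd1 : |p.1 - q.1| ≤ dist p q := by
        rw [Prod.dist_eq]; exact le_max_of_le_left (by rw [Real.dist_eq])
      have hd2 : |p.2 - q.2| ≤ dist p q := by
        rw [Prod.dist_eq]; exact le_max_of_le_right (by rw [Real.dist_eq])
      have h1 : dist (nrm p) (nrm q) ≤ nrm (p - q) := by
        rw [Real.dist_eq]; exact hrev p q
      have h2 : nrm (p - q) ≤ c₁ * |p.1 - q.1| + c₂ * |p.2 - q.2| := hupper _
      have h3 : (Real.toNNReal (c₁ + c₂) : ℝ) = c₁ + c₂ :=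
        Real.coe_toNNReal _ (by linarith)
      rw [h3]
      have hdnn : 0 ≤ dist p q := dist_nonneg
      nlinarith
    exact this.continuous
  -- lower bound via compactness of sphere
  obtain ⟨p₀, hp₀mem, hmin⟩ :=
    (isCompact_sphere (0 : ℝ × ℝ) 1).exists_isMinOn
      ⟨((1:ℝ), (0:ℝ)), by simp [mem_sphere_zero_iff_norm, Prod.norm_def]⟩
      hcont.continuousOn
  set a : ℝ := nrm p₀ with ha_def
  have hp₀ne : p₀ ≠ 0 := by
    intro h
    rw [mem_sphere_zero_iff_norm, h] at hp₀mem; simp at hp₀mem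
  have ha : 0 < a := by
    rcases (hnonneg p₀).lt_or_eq with h | h
    · exact h
    · exact absurd ((hdef p₀).mp h.symm) hp₀ne
  have hlow : ∀ p : ℝ × ℝ, a * ‖p‖ ≤ nrm p := by
    intro p
    rcases eq_or_ne p 0 with rfl | hp
    · simp [h0]
    · have hnp : ‖p‖ ≠ 0 := norm_ne_zero_iff.mpr hp
      have hnpos : 0 < ‖p‖ := norm_pos_iff.mpr hp
      set u := ‖p‖⁻¹ • p with hu
      have husph : u ∈ Metric.sphere (0 : ℝ × ℝ) 1 := by
        rw [mem_sphere_zero_iff_norm, hu, norm_smul]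
        simp [abs_of_pos (inv_pos.mpr hnpos), inv_mul_cancel₀ hnp]
      have h1 : a ≤ nrm u := hmin husph
      have h2 : nrm p = ‖p‖ * nrm u := by
        rw [hu, hsmul, abs_of_pos (inv_pos.mpr hnpos)]
        field_simp
      rw [h2]
      nlinarith
  -- the open unit ball of nrm
  set U : Set (ℝ × ℝ) := {p | nrm p < 1} with hU
  have hUopen : IsOpen U := isOpen_lt hcont continuous_const
  have hUfin : volume U < ⊤ := by
    refine lt_of_le_of_lt (measure_mono ?_) (measure_ball_lt_top (x := (0:ℝ×ℝ)) (r := 1/a))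
    intro p hp
    rw [Metric.mem_ball, dist_zero_right]
    have h1 : a * ‖p‖ ≤ nrm p := hlow p
    have h2 : nrm p < 1 := hp
    rw [lt_div_iff₀ ha]
    nlinarith
  have hfr : Module.finrank ℝ (ℝ × ℝ) = 2 := by simp
  have hscale : ∀ s : ℝ, 0 < s →
      volume {p : ℝ × ℝ | nrm p < s} = ENNReal.ofReal (s^2) * volume U := by
    intro s hs
    have hset : {p : ℝ × ℝ | nrm p < s} = s • U := by
      ext p
      rw [Set.mem_smul_set_iff_inv_smul_mem₀ (ne_of_gt hs)]
      simp only [hU, Set.mem_setOf_eq, hsmul, abs_of_pos (inv_pos.mpr hs)]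
      rw [inv_mul_lt_iff₀ hs, mul_one]
    rw [hset, Measure.addHaar_smul, hfr, abs_of_nonneg (by positivity)]
  set v : ℝ := (volume U).toReal with hv
  have hv0 : 0 ≤ v := ENNReal.toReal_nonneg
  -- constant
  set c : ℝ := c₁ + c₂ with hc
  have hc0 : 0 ≤ c := by positivity
  set D : ℝ := (2*c + 1) / a with hD
  have hD0 : 0 ≤ D := by positivity
  have hDa : D * a = 2*c + 1 := by rw [hD]; field_simp
  refine ⟨(1 + D) * 2 * (c + 2) * v + 1, by positivity, ?_⟩
  intro L hL k hk hkL
  set t : ℝ := nrm ((k.1 : ℝ), (k.2 : ℝ)) with ht_def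
  -- t ≥ a
  have hknorm : (1:ℝ) ≤ ‖(((k.1:ℝ)), ((k.2:ℝ)))‖ := by
    rw [Prod.norm_def]
    have hor : k.1 ≠ 0 ∨ k.2 ≠ 0 := by
      by_contra hc'; push_neg at hc'
      exact hk (Prod.ext hc'.1 hc'.2)
    rcases hor with h | h
    · refine le_max_of_le_left ?_
      show (1:ℝ) ≤ ‖((k.1:ℝ))‖
      rw [Real.norm_eq_abs]; exact_mod_cast Int.one_le_abs h
    · refine le_max_of_le_right ?_
      show (1:ℝ) ≤ ‖((k.2:ℝ))‖
      rw [Real.norm_eq_abs]; exact_mod_cast Int.one_le_abs h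
  have hta : a ≤ t := by
    have := hlow ((k.1 : ℝ), (k.2 : ℝ))
    nlinarith
  have ht0 : 0 < t := lt_of_lt_of_le ha hta
  -- the annulus lattice set is finite
  set S : Set (ℤ × ℤ) := {j : ℤ × ℤ | L - t ≤ nrm ((j.1 : ℝ), (j.2 : ℝ)) ∧
      nrm ((j.1 : ℝ), (j.2 : ℝ)) ≤ L} with hS
  set M : ℤ := ⌈L / a⌉ with hM
  have hSfin : S.Finite := by
    refine Set.Finite.subset (Set.finite_Icc ((-M, -M) : ℤ × ℤ) (M, M)) ?_
    intro j hj
    have hjL : nrm ((j.1 : ℝ), (j.2 : ℝ)) ≤ L := hj.2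
    have h1 : a * ‖(((j.1:ℝ)), ((j.2:ℝ)))‖ ≤ L := le_trans (hlow _) hjL
    have h2 : ‖(((j.1:ℝ)), ((j.2:ℝ)))‖ ≤ L / a := by
      rw [le_div_iff₀ ha]; nlinarith
    have hbd : ∀ i : ℤ, |(i : ℝ)| ≤ L / a → -M ≤ i ∧ i ≤ M := by
      intro i hi
      have h3 : (|i| : ℝ) ≤ (M : ℝ) := le_trans hi (Int.le_ceil _)
      have h4 : |i| ≤ M := by exact_mod_cast h3
      rcases abs_le.mp h4 with ⟨h5, h6⟩; exact ⟨h5, h6⟩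
    have hb1 : |(j.1 : ℝ)| ≤ L / a := by
      refine le_trans ?_ h2
      rw [Prod.norm_def]
      exact le_max_of_le_left (le_of_eq (Real.norm_eq_abs _).symm)
    have hb2 : |(j.2 : ℝ)| ≤ L / a := by
      refine le_trans ?_ h2
      rw [Prod.norm_def]
      exact le_max_of_le_right (le_of_eq (Real.norm_eq_abs _).symm)
    obtain ⟨ha1, ha2⟩ := hbd _ hb1
    obtain ⟨hb1', hb2'⟩ := hbd _ hb2
    exact ⟨⟨ha1, hb1'⟩, ⟨ha2, hb2'⟩⟩
  set F := hSfin.toFinset with hF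
  -- unit squares around lattice points
  set sq : ℤ × ℤ → Set (ℝ × ℝ) := fun j =>
    (Set.Ico ((j.1:ℝ) - 1/2) ((j.1:ℝ) + 1/2)) ×ˢ
      (Set.Ico ((j.2:ℝ) - 1/2) ((j.2:ℝ) + 1/2)) with hsq
  have msq : ∀ j, MeasurableSet (sq j) := fun j =>
    measurableSet_Ico.prod measurableSet_Ico
  have vsq : ∀ j, volume (sq j) = 1 := by
    intro j
    rw [hsq]
    simp only
    rw [show (volume : Measure (ℝ×ℝ)) = (volume : Measure ℝ).prod volume from rfl,
      Measure.prod_prod, Real.volume_Ico, Real.volume_Ico]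
    norm_num
  have int_eq : ∀ (m n : ℤ) (x : ℝ), (m:ℝ) - 1/2 ≤ x → x < m + 1/2 →
      (n:ℝ) - 1/2 ≤ x → x < n + 1/2 → m = n := by
    intro m n x h1 h2 h3 h4
    have h : |(m - n : ℤ)| < 1 := by
      have : |((m:ℝ) - n)| < 1 := by rw [abs_lt]; constructor <;> push_cast <;> linarith
      exact_mod_cast this
    rcases abs_lt.mp h with ⟨h5, h6⟩; omega
  have hsqdisj : ∀ j j' : ℤ × ℤ, j ≠ j' → Disjoint (sq j) (sq j') := by
    intro j j' hne
    rw [Set.disjoint_left]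
    intro p hp hq
    obtain ⟨hp1, hp2⟩ := hp
    obtain ⟨hq1, hq2⟩ := hq
    rw [Set.mem_Ico] at hp1 hp2 hq1 hq2
    exact hne (Prod.ext (int_eq _ _ _ hp1.1 hp1.2 hq1.1 hq1.2)
      (int_eq _ _ _ hp2.1 hp2.2 hq2.1 hq2.2))
  -- squares around annulus points lie in a fattened annulus
  have hsqmem : ∀ j ∈ S, ∀ p ∈ sq j, L - t - c ≤ nrm p ∧ nrm p ≤ L + c := by
    intro j hj p hp
    obtain ⟨hp1, hp2⟩ := hp
    rw [Set.mem_Ico] at hp1 hp2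
    have hd1 : |(p - ((j.1:ℝ), (j.2:ℝ))).1| ≤ 1/2 := by
      simp only [Prod.fst_sub]
      rw [abs_le]; constructor <;> simp <;> linarith
    have hd2 : |(p - ((j.1:ℝ), (j.2:ℝ))).2| ≤ 1/2 := by
      simp only [Prod.snd_sub]
      rw [abs_le]; constructor <;> simp <;> linarith
    have hnd : nrm (p - ((j.1:ℝ), (j.2:ℝ))) ≤ c := by
      have := hupper (p - ((j.1:ℝ), (j.2:ℝ)))
      nlinarith
    have htr : nrm p ≤ nrm ((j.1:ℝ), (j.2:ℝ)) + nrm (p - ((j.1:ℝ), (j.2:ℝ))) := by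
      have := htri ((j.1:ℝ), (j.2:ℝ)) (p - ((j.1:ℝ), (j.2:ℝ)))
      rwa [add_sub_cancel] at this
    have hr2 := hrev p ((j.1:ℝ), (j.2:ℝ))
    rw [abs_le] at hr2
    have hjmem : L - t ≤ nrm ((j.1:ℝ), (j.2:ℝ)) ∧ nrm ((j.1:ℝ), (j.2:ℝ)) ≤ L := hj
    constructor
    · linarith [hr2.2]
    · linarith [hr2.1]
  -- the inner forbidden ball
  set r : ℝ := max 0 (L - t - c) with hr
  have hr0 : 0 ≤ r := le_max_left _ _
  set B : Set (ℝ × ℝ) := {p | nrm p < r} with hB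
  have hvolB : volume B = ENNReal.ofReal (r^2) * volume U := by
    rcases hr0.lt_or_eq with h | h
    · exact hscale r h
    · have hBempty : B = ∅ := by
        ext p
        simp only [hB, Set.mem_setOf_eq, Set.mem_empty_iff_false, iff_false, not_lt, ← h]
        exact hnonneg p
      rw [hBempty, ← h]
      simp
  have hcard : volume (⋃ j ∈ F, sq j) = (F.card : ℝ≥0∞) := by
    rw [measure_biUnion_finset (fun x _ y _ hxy => hsqdisj x y hxy) (fun b _ => msq b)]
    simp [vsq]
  have hdisjB : Disjoint B (⋃ j ∈ F, sq j) := by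
    rw [Set.disjoint_left]
    intro p hpB hpU
    rw [Set.mem_iUnion₂] at hpU
    obtain ⟨j, hj, hpj⟩ := hpU
    have hjS : j ∈ S := by rwa [hF, Set.Finite.mem_toFinset] at hj
    have h1 := (hsqmem j hjS p hpj).1
    have h2 : r ≤ nrm p := max_le (hnonneg p) h1
    exact absurd (show nrm p < r from hpB) (not_lt.mpr h2)
  have hLc1 : (0:ℝ) < L + c + 1 := by linarith
  have hsubBig : B ∪ ⋃ j ∈ F, sq j ⊆ {p : ℝ × ℝ | nrm p < L + c + 1} := by
    intro p hp
    rcases hp with hp | hp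
    · have h1 : nrm p < r := hp
      have hrle : r ≤ L + c + 1 := by
        rw [hr]
        apply max_le
        · linarith
        · linarith
      exact lt_of_lt_of_le h1 hrle
    · rw [Set.mem_iUnion₂] at hp
      obtain ⟨j, hj, hpj⟩ := hp
      have hjS : j ∈ S := by rwa [hF, Set.Finite.mem_toFinset] at hj
      have h2 := (hsqmem j hjS p hpj).2
      show nrm p < L + c + 1
      linarith
  have hkey : volume B + (F.card : ℝ≥0∞) ≤ ENNReal.ofReal ((L+c+1)^2) * volume U := by
    calc volume B + (F.card : ℝ≥0∞) = volume (B ∪ ⋃ j ∈ F, sq j) := by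
          rw [measure_union hdisjB (F.measurableSet_biUnion (fun b _ => msq b)), hcard]
    _ ≤ volume {p : ℝ × ℝ | nrm p < L + c + 1} := measure_mono hsubBig
    _ = ENNReal.ofReal ((L+c+1)^2) * volume U := hscale _ hLc1
  have hfinR : ENNReal.ofReal ((L+c+1)^2) * volume U ≠ ⊤ :=
    ENNReal.mul_ne_top ENNReal.ofReal_ne_top hUfin.ne
  have hreal : r^2 * v + (F.card : ℝ) ≤ (L+c+1)^2 * v := by
    have h1 := ENNReal.toReal_mono hfinR hkey
    rw [hvolB, ENNReal.toReal_add (ENNReal.mul_ne_top ENNReal.ofReal_ne_top hUfin.ne)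
        (ENNReal.natCast_ne_top _),
      ENNReal.toReal_mul, ENNReal.toReal_mul, ENNReal.toReal_ofReal (sq_nonneg _),
      ENNReal.toReal_ofReal (sq_nonneg _), ENNReal.toReal_natCast] at h1
    exact h1
  have hncard : S.ncard = F.card := Set.ncard_eq_toFinset_card S hSfin
  have hstep1 : (L+c+1)^2 - r^2 ≤ (t + 2*c + 1) * (2*(c+2)*L) := by
    rcases le_or_gt (L - t - c) 0 with h | h
    · have hre : r = 0 := max_eq_left h
      rw [hre]
      have e1 : L + c + 1 ≤ t + 2*c + 1 := by linarith
      have e2 : L + c + 1 ≤ 2*(c+2)*L := by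
        nlinarith [mul_nonneg (by linarith : (0:ℝ) ≤ 2*c+3) (by linarith : (0:ℝ) ≤ L-1)]
      nlinarith [mul_le_mul e1 e2 (by linarith) (by linarith)]
    · have hre : r = L - t - c := max_eq_right h.le
      rw [hre]
      have e1 : (0:ℝ) ≤ t + 2*c + 1 := by linarith
      have e2 : 2*L + 1 - t ≤ 2*(c+2)*L := by
        nlinarith [mul_nonneg hc0 (by linarith : (0:ℝ) ≤ L)]
      nlinarith [mul_le_mul_of_nonneg_left e2 e1]
  have h2c : 2*c + 1 ≤ D * t := by nlinarith
  have hstep2 : (t + 2*c + 1) * (2*(c+2)*L) ≤ ((1+D) * 2 * (c+2)) * t * L := by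
    nlinarith [mul_nonneg (mul_nonneg (by linarith : (0:ℝ) ≤ 2*(c+2)) (by linarith : (0:ℝ) ≤ L))
      (by linarith : (0:ℝ) ≤ D*t - (2*c+1))]
  have hLt : 0 ≤ L * t := by nlinarith
  have hNle : (S.ncard : ℝ) ≤ ((L+c+1)^2 - r^2) * v := by
    rw [hncard]; nlinarith
  calc (S.ncard : ℝ) ≤ ((L+c+1)^2 - r^2) * v := hNle
  _ ≤ (((1+D) * 2 * (c+2)) * t * L) * v := by nlinarith
  _ ≤ ((1 + D) * 2 * (c + 2) * v + 1) * L * t := by nlinarith
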